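/- Let T be a bounded linear operator on H admitting an A-adjoint T♯. If w_A(T) = ‖T‖_A/2, then ‖Re_A(T)‖_A = ‖Im_A(T)‖_A = ‖T‖_A/2. -/

import Mathlib

/-!
Positivity of `A` gives `A = B²` with `B = √A`, so `⟨x, y⟩_A = ⟨B x, B y⟩` and the `A`-geometry is
that of an honest inner product pulled back along `B`.

An operator with an `A`-adjoint is `A`-bounded: for `A`-selfadjoint `R`, Cauchy–Schwarz gives
`‖R x‖_A² ≤ ‖x‖_A ‖R² x‖_A`, and iterating along `R^(2^k)` yields
`‖R x‖_A ≤ ‖R‖ ‖x‖_A`; then `‖T x‖_A² ≤ ‖x‖_A ‖T♯T x‖_A` with `T♯T` `A`-selfadjoint.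

`Re_A T` and `Im_A T` are `A`-selfadjoint, so polarization gives `‖Re_A T‖_A ≤ w_A(Re_A T)`, and
`⟨Re_A T x, x⟩_A = Re ⟨T x, x⟩_A` gives `w_A(Re_A T) ≤ w_A(T)`; likewise for `Im_A T`. Since
`T = Re_A T + i Im_A T`, `‖T‖_A ≤ ‖Re_A T‖_A + ‖Im_A T‖_A ≤ 2 w_A(T) = ‖T‖_A`, which forces both
bounds to be equalities.
-/

noncomputable section

open Complex ContinuousLinearMap

variable {H : Type*} [NormedAddCommGroup H] [InnerProductSpace ℂ H] [CompleteSpace H]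

/-- The `A`-inner product `⟨x, y⟩_A = ⟨A x, y⟩`. -/
def innA (A : H →L[ℂ] H) (x y : H) : ℂ := @inner ℂ _ _ (A x) y

/-- The `A`-seminorm `‖x‖_A = √⟨A x, x⟩`. -/
def vnormA (A : H →L[ℂ] H) (x : H) : ℝ := Real.sqrt (innA A x x).re

/-- The `A`-operator seminorm `‖T‖_A = sup {‖T x‖_A : ‖x‖_A = 1}`. -/
def opnormA (A T : H →L[ℂ] H) : ℝ :=
  sSup {r : ℝ | ∃ x : H, vnormA A x = 1 ∧ r = vnormA A (T x)}

/-- The `A`-numerical radius `w_A(T) = sup {|⟨T x, x⟩_A| : ‖x‖_A = 1}`. -/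
def wA (A T : H →L[ℂ] H) : ℝ :=
  sSup {r : ℝ | ∃ x : H, vnormA A x = 1 ∧ r = ‖innA A (T x) x‖}

/-- The `A`-numerical range `W_A(T) = {⟨T x, x⟩_A : ‖x‖_A = 1}`. -/
def WA (A T : H →L[ℂ] H) : Set ℂ :=
  {z : ℂ | ∃ x : H, vnormA A x = 1 ∧ z = innA A (T x) x}

/-- `Re_A(T) = (T + T♯)/2`, given an `A`-adjoint `Ts` of `T`. -/
def ReA (T Ts : H →L[ℂ] H) : H →L[ℂ] H := (2 : ℂ)⁻¹ • (T + Ts)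

/-- `Im_A(T) = (T - T♯)/(2i)`, given an `A`-adjoint `Ts` of `T`. -/
def ImA (T Ts : H →L[ℂ] H) : H →L[ℂ] H := (2 * Complex.I)⁻¹ • (T - Ts)

/-- `Ts` is an `A`-adjoint of `T`, i.e. `A ∘ Ts = T* ∘ A`. -/
def IsAAdjoint (A T Ts : H →L[ℂ] H) : Prop :=
  A.comp Ts = (ContinuousLinearMap.adjoint T).comp A

set_option linter.unusedSectionVars false

open Filter

theorem le_of_forall_pow_le_mul_pow {N D E : ℝ} (hD : 0 ≤ D) {n : ℕ → ℕ}
    (hn : Tendsto n atTop atTop) (h : ∀ k, N ^ n k ≤ E * D ^ n k) : N ≤ D := by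
  by_contra! hDN
  have hN : 0 < N := hD.trans_lt hDN
  have hlim : Tendsto (fun k => E * (D / N) ^ n k) atTop (nhds 0) := by
    simpa using ((tendsto_pow_atTop_nhds_zero_of_lt_one (div_nonneg hD hN.le)
      ((div_lt_one hN).2 hDN)).comp hn).const_mul E
  obtain ⟨k, hk⟩ := (hlim.eventually_lt_const one_pos).exists
  have : N ^ n k ≤ N ^ n k * (E * (D / N) ^ n k) := by
    rw [div_pow, mul_div_assoc', mul_div_cancel₀ _ (pow_pos hN _).ne']
    exact h k
  nlinarith [pow_pos hN (n k)]

section Seminorm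

variable {A : H →L[ℂ] H}

theorem vnormA_nonneg (x : H) : 0 ≤ vnormA A x := Real.sqrt_nonneg _

theorem innA_add_left (x y z : H) : innA A (x + y) z = innA A x z + innA A y z := by
  rw [innA, map_add, inner_add_left, innA, innA]

theorem innA_sub_left (x y z : H) : innA A (x - y) z = innA A x z - innA A y z := by
  rw [innA, map_sub, inner_sub_left, innA, innA]

theorem innA_smul_left (c : ℂ) (x y : H) :
    innA A (c • x) y = starRingEnd ℂ c * innA A x y := by
  rw [innA, map_smul, inner_smul_left, innA]

theorem innA_smul_right (c : ℂ) (x y : H) : innA A x (c • y) = c * innA A x y :=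
  inner_smul_right _ _ _

theorem vnormA_le_sqrt_norm_mul (x : H) : vnormA A x ≤ √‖A‖ * ‖x‖ := by
  rw [← Real.sqrt_sq (norm_nonneg x), ← Real.sqrt_mul (norm_nonneg A)]
  refine Real.sqrt_le_sqrt ((Complex.re_le_norm _).trans ?_)
  calc ‖innA A x x‖ ≤ ‖A x‖ * ‖x‖ := norm_inner_le_norm _ _
    _ ≤ ‖A‖ * ‖x‖ * ‖x‖ := by gcongr; exact A.le_opNorm x
    _ = ‖A‖ * ‖x‖ ^ 2 := by ring

theorem innA_eq_inner_sqrt (hA : A.IsPositive) (x y : H) :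
    innA A x y = inner ℂ (CFC.sqrt A x) (CFC.sqrt A y) := by
  have hB : adjoint (CFC.sqrt A) = CFC.sqrt A := isSelfAdjoint_iff'.mp
    ((nonneg_iff_isPositive _).mp (CFC.sqrt_nonneg A)).isSelfAdjoint
  have hBB : CFC.sqrt A * CFC.sqrt A = A :=
    CFC.sqrt_mul_sqrt_self A ((nonneg_iff_isPositive A).mpr hA)
  calc innA A x y = inner ℂ (CFC.sqrt A (CFC.sqrt A x)) y := by
        rw [innA]; nth_rw 1 [← hBB]; rfl
    _ = inner ℂ (CFC.sqrt A x) (CFC.sqrt A y) := by rw [← adjoint_inner_left, hB]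

theorem vnormA_eq_norm_sqrt (hA : A.IsPositive) (x : H) : vnormA A x = ‖CFC.sqrt A x‖ := by
  rw [vnormA, innA_eq_inner_sqrt hA, inner_self_eq_norm_sq_to_K]
  norm_cast
  exact Real.sqrt_sq (norm_nonneg _)

theorem innA_self_eq (hA : A.IsPositive) (x : H) : innA A x x = ((vnormA A x ^ 2 : ℝ) : ℂ) := by
  rw [innA_eq_inner_sqrt hA, inner_self_eq_norm_sq_to_K, vnormA_eq_norm_sqrt hA]
  push_cast; rfl

theorem re_innA_self (hA : A.IsPositive) (x : H) : (innA A x x).re = vnormA A x ^ 2 := by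
  rw [innA_self_eq hA, Complex.ofReal_re]

theorem conj_innA (hA : A.IsPositive) (x y : H) : starRingEnd ℂ (innA A x y) = innA A y x := by
  rw [innA_eq_inner_sqrt hA, innA_eq_inner_sqrt hA, inner_conj_symm]

theorem norm_innA_le (hA : A.IsPositive) (x y : H) :
    ‖innA A x y‖ ≤ vnormA A x * vnormA A y := by
  rw [innA_eq_inner_sqrt hA, vnormA_eq_norm_sqrt hA, vnormA_eq_norm_sqrt hA]
  exact norm_inner_le_norm _ _

theorem vnormA_add_le (hA : A.IsPositive) (x y : H) :
    vnormA A (x + y) ≤ vnormA A x + vnormA A y := by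
  simp only [vnormA_eq_norm_sqrt hA, map_add]
  exact norm_add_le _ _

theorem vnormA_smul (hA : A.IsPositive) (c : ℂ) (x : H) :
    vnormA A (c • x) = ‖c‖ * vnormA A x := by
  rw [vnormA_eq_norm_sqrt hA, vnormA_eq_norm_sqrt hA, map_smul, norm_smul]

theorem vnormA_add_sq_add_vnormA_sub_sq (hA : A.IsPositive) (x y : H) :
    vnormA A (x + y) ^ 2 + vnormA A (x - y) ^ 2 = 2 * (vnormA A x ^ 2 + vnormA A y ^ 2) := by
  simp only [vnormA_eq_norm_sqrt hA, map_add, map_sub]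
  exact parallelogram_law_with_norm ℂ _ _

theorem vnormA_inv_smul_self (hA : A.IsPositive) {x : H} (hx : vnormA A x ≠ 0) :
    vnormA A ((vnormA A x : ℂ)⁻¹ • x) = 1 := by
  rw [vnormA_smul hA, norm_inv, Complex.norm_real, Real.norm_eq_abs,
    abs_of_nonneg (vnormA_nonneg x), inv_mul_cancel₀ hx]

end Seminorm

namespace IsAAdjoint

variable {A T Ts S Ss : H →L[ℂ] H}

theorem innA_apply_left (h : IsAAdjoint A T Ts) (x y : H) :
    innA A (Ts x) y = innA A x (T y) := by
  rw [innA, show A (Ts x) = adjoint T (A x) from congr($h x), adjoint_inner_left, innA]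

theorem symm (hA : A.IsPositive) (h : IsAAdjoint A T Ts) : IsAAdjoint A Ts T := by
  have := congr(adjoint $h)
  rwa [adjoint_comp, adjoint_comp, adjoint_adjoint, hA.isSelfAdjoint.adjoint_eq, eq_comm]
    at this

theorem comp (hS : IsAAdjoint A S Ss) (hT : IsAAdjoint A T Ts) :
    IsAAdjoint A (S.comp T) (Ts.comp Ss) := by
  rw [IsAAdjoint, ← ContinuousLinearMap.comp_assoc, hT, ContinuousLinearMap.comp_assoc, hS,
    adjoint_comp, ContinuousLinearMap.comp_assoc]

theorem pow (h : IsAAdjoint A T T) (n : ℕ) : IsAAdjoint A (T ^ n) (T ^ n) := by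
  induction n with
  | zero => rw [pow_zero, IsAAdjoint, one_def, comp_id, adjoint_id, id_comp]
  | succ n ih =>
    have := h.comp ih
    rwa [← mul_def, ← mul_def, ← pow_succ', ← pow_succ] at this

theorem add (hT : IsAAdjoint A T Ts) (hS : IsAAdjoint A S Ss) :
    IsAAdjoint A (T + S) (Ts + Ss) := by
  rw [IsAAdjoint, comp_add, hT, hS, map_add, add_comp]

theorem sub (hT : IsAAdjoint A T Ts) (hS : IsAAdjoint A S Ss) :
    IsAAdjoint A (T - S) (Ts - Ss) := by
  rw [IsAAdjoint, comp_sub, hT, hS, map_sub, sub_comp]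

theorem smul (h : IsAAdjoint A T Ts) (c : ℂ) :
    IsAAdjoint A (c • T) (starRingEnd ℂ c • Ts) := by
  rw [IsAAdjoint, comp_smulₛₗ, h, map_smulₛₗ, smul_comp, RingHom.id_apply]

theorem reA (hA : A.IsPositive) (h : IsAAdjoint A T Ts) :
    IsAAdjoint A (ReA T Ts) (ReA T Ts) := by
  have := (h.add (h.symm hA)).smul 2⁻¹
  rwa [map_inv₀, map_ofNat, add_comm Ts] at this

theorem imA (hA : A.IsPositive) (h : IsAAdjoint A T Ts) :
    IsAAdjoint A (ImA T Ts) (ImA T Ts) := by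
  have := (h.sub (h.symm hA)).smul (2 * I)⁻¹
  rwa [map_inv₀, map_mul, map_ofNat, conj_I, mul_neg, inv_neg, neg_smul, ← smul_neg,
    neg_sub] at this

theorem vnormA_apply_sq_le (hA : A.IsPositive) (h : IsAAdjoint A T Ts) (x : H) :
    vnormA A (T x) ^ 2 ≤ vnormA A x * vnormA A (Ts (T x)) := by
  calc vnormA A (T x) ^ 2 = (innA A (Ts (T x)) x).re := by
        rw [h.innA_apply_left, re_innA_self hA]
    _ ≤ ‖innA A (Ts (T x)) x‖ := Complex.re_le_norm _
    _ ≤ vnormA A (Ts (T x)) * vnormA A x := norm_innA_le hA _ _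
    _ = vnormA A x * vnormA A (Ts (T x)) := mul_comm _ _

theorem vnormA_apply_pow_le (hA : A.IsPositive) (h : IsAAdjoint A T T) (x : H) (k : ℕ) :
    vnormA A (T x) ^ 2 ^ k ≤ vnormA A x ^ (2 ^ k - 1) * vnormA A ((T ^ 2 ^ k) x) := by
  induction k with
  | zero => simp
  | succ k ih =>
    have hstep := (h.pow (2 ^ k)).vnormA_apply_sq_le hA x
    have hsquare : (T ^ 2 ^ k) ((T ^ 2 ^ k) x) = (T ^ 2 ^ (k + 1)) x := by
      rw [pow_succ', two_mul, pow_add]; rfl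
    rw [hsquare] at hstep
    have h1 : 1 ≤ 2 ^ k := Nat.one_le_two_pow
    calc vnormA A (T x) ^ 2 ^ (k + 1) = (vnormA A (T x) ^ 2 ^ k) ^ 2 := by rw [pow_succ, pow_mul]
      _ ≤ (vnormA A x ^ (2 ^ k - 1) * vnormA A ((T ^ 2 ^ k) x)) ^ 2 := by
        gcongr; exact pow_nonneg (vnormA_nonneg _) _
      _ = vnormA A x ^ (2 * (2 ^ k - 1)) * vnormA A ((T ^ 2 ^ k) x) ^ 2 := by ring
      _ ≤ vnormA A x ^ (2 * (2 ^ k - 1)) * (vnormA A x * vnormA A ((T ^ 2 ^ (k + 1)) x)) := by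
        gcongr; exact pow_nonneg (vnormA_nonneg _) _
      _ = vnormA A x ^ (2 ^ (k + 1) - 1) * vnormA A ((T ^ 2 ^ (k + 1)) x) := by
        rw [← mul_assoc, ← pow_succ]; congr 2; omega

theorem vnormA_apply_le_norm_mul (hA : A.IsPositive) (h : IsAAdjoint A T T) (x : H) :
    vnormA A (T x) ≤ ‖T‖ * vnormA A x := by
  rcases (vnormA_nonneg x).eq_or_lt with hx | hx
  · have := h.vnormA_apply_sq_le hA x
    rw [← hx, zero_mul] at this
    rw [← hx, mul_zero]
    exact le_of_eq (pow_eq_zero_iff two_ne_zero |>.1 (le_antisymm this (sq_nonneg _)))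
  -- only the crude bound `‖Tⁿ x‖_A ≤ √‖A‖ ‖T‖ⁿ ‖x‖` is at hand; `2^k`-th roots remove the constant
  set t := vnormA A x
  refine le_of_forall_pow_le_mul_pow (E := √‖A‖ * ‖x‖ / t) (by positivity)
    (tendsto_pow_atTop_atTop_of_one_lt one_lt_two) fun k => ?_
  calc vnormA A (T x) ^ 2 ^ k ≤ t ^ (2 ^ k - 1) * vnormA A ((T ^ 2 ^ k) x) :=
        h.vnormA_apply_pow_le hA x k
    _ ≤ t ^ (2 ^ k - 1) * (√‖A‖ * (‖T‖ ^ 2 ^ k * ‖x‖)) := by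
        gcongr
        refine (vnormA_le_sqrt_norm_mul _).trans ?_
        gcongr
        exact ((T ^ 2 ^ k).le_opNorm x).trans
          (by gcongr; exact norm_pow_le' T (Nat.two_pow_pos k))
    _ = √‖A‖ * ‖x‖ / t * (‖T‖ * t) ^ 2 ^ k := by
        rw [pow_sub₀ t hx.ne' Nat.one_le_two_pow]
        field_simp
        ring

theorem vnormA_apply_le (hA : A.IsPositive) (h : IsAAdjoint A T Ts) (x : H) :
    vnormA A (T x) ≤ √‖Ts.comp T‖ * vnormA A x := by
  have hsq := h.vnormA_apply_sq_le hA x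
  have hR := ((h.symm hA).comp h).vnormA_apply_le_norm_mul hA x
  rw [comp_apply] at hR
  rw [← Real.sqrt_sq (vnormA_nonneg (T x)), ← Real.sqrt_sq (vnormA_nonneg x),
    ← Real.sqrt_mul (norm_nonneg _)]
  refine Real.sqrt_le_sqrt (hsq.trans ?_)
  nlinarith [vnormA_nonneg (A := A) x]

end IsAAdjoint

/-- `opnormA` and `wA` are `sSup`s in `ℝ`, which are junk (`0`) on unbounded sets; A-boundedness
is what makes them genuine suprema. -/
def IsABounded (A S : H →L[ℂ] H) : Prop :=
  ∃ c, ∀ x, vnormA A (S x) ≤ c * vnormA A x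

theorem IsAAdjoint.isABounded {A T Ts : H →L[ℂ] H} (hA : A.IsPositive)
    (h : IsAAdjoint A T Ts) : IsABounded A T :=
  ⟨_, h.vnormA_apply_le hA⟩

section Suprema

variable {A S T : H →L[ℂ] H}

theorem opnormA_nonneg : 0 ≤ opnormA A S :=
  Real.sSup_nonneg (by rintro _ ⟨x, -, rfl⟩; exact vnormA_nonneg _)

theorem wA_nonneg : 0 ≤ wA A S :=
  Real.sSup_nonneg (by rintro _ ⟨x, -, rfl⟩; exact norm_nonneg _)

theorem opnormA_le_bound {c : ℝ} (hc : 0 ≤ c)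
    (h : ∀ x, vnormA A x = 1 → vnormA A (S x) ≤ c) :
    opnormA A S ≤ c :=
  Real.sSup_le (by rintro _ ⟨x, hx, rfl⟩; exact h x hx) hc

theorem wA_le_bound {c : ℝ} (hc : 0 ≤ c)
    (h : ∀ x, vnormA A x = 1 → ‖innA A (S x) x‖ ≤ c) :
    wA A S ≤ c :=
  Real.sSup_le (by rintro _ ⟨x, hx, rfl⟩; exact h x hx) hc

theorem vnormA_le_opnormA (hS : IsABounded A S) {x : H} (hx : vnormA A x = 1) :
    vnormA A (S x) ≤ opnormA A S := by
  obtain ⟨c, hc⟩ := hS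
  refine le_csSup ⟨c, ?_⟩ ⟨x, hx, rfl⟩
  rintro _ ⟨y, hy, rfl⟩
  simpa [hy] using hc y

theorem norm_innA_le_wA (hA : A.IsPositive) (hS : IsABounded A S) {x : H}
    (hx : vnormA A x = 1) : ‖innA A (S x) x‖ ≤ wA A S := by
  obtain ⟨c, hc⟩ := hS
  refine le_csSup ⟨c, ?_⟩ ⟨x, hx, rfl⟩
  rintro _ ⟨y, hy, rfl⟩
  calc ‖innA A (S y) y‖ ≤ vnormA A (S y) * vnormA A y := norm_innA_le hA _ _
    _ ≤ c := by simpa [hy] using hc y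

theorem norm_innA_le_wA_mul (hA : A.IsPositive) (hS : IsABounded A S) (x : H) :
    ‖innA A (S x) x‖ ≤ wA A S * vnormA A x ^ 2 := by
  rcases eq_or_ne (vnormA A x) 0 with hx | hx
  · simpa [hx] using norm_innA_le hA (S x) x
  have hu := norm_innA_le_wA hA hS (vnormA_inv_smul_self hA hx)
  rw [map_smul, innA_smul_left, innA_smul_right, norm_mul, norm_mul, Complex.norm_conj,
    norm_inv, Complex.norm_real, Real.norm_eq_abs, abs_of_nonneg (vnormA_nonneg x)] at hu
  calc ‖innA A (S x) x‖
        = vnormA A x ^ 2 * ((vnormA A x)⁻¹ * ((vnormA A x)⁻¹ * ‖innA A (S x) x‖)) := by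
          field_simp
    _ ≤ vnormA A x ^ 2 * wA A S := by gcongr
    _ = wA A S * vnormA A x ^ 2 := mul_comm _ _

theorem wA_le_of_norm_innA_le (hA : A.IsPositive) (hT : IsABounded A T)
    (h : ∀ x, ‖innA A (S x) x‖ ≤ ‖innA A (T x) x‖) : wA A S ≤ wA A T :=
  wA_le_bound wA_nonneg fun x hx => (h x).trans (norm_innA_le_wA hA hT hx)

end Suprema

theorem reA_add_I_smul_imA (T Ts : H →L[ℂ] H) : ReA T Ts + I • ImA T Ts = T := by
  have hI : I * (2 * I)⁻¹ = 2⁻¹ := by field_simp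
  rw [ReA, ImA, smul_smul, hI]
  module

namespace IsAAdjoint

variable {A S T Ts : H →L[ℂ] H}

theorem re_innA_add_sub (hA : A.IsPositive) (hS : IsAAdjoint A S S) (x y : H) :
    (innA A (S (x + y)) (x + y)).re - (innA A (S (x - y)) (x - y)).re
      = 4 * (innA A (S x) y).re := by
  have hsym : innA A (S y) x = starRingEnd ℂ (innA A (S x) y) := by
    rw [hS.innA_apply_left, conj_innA hA]
  have hpol : innA A (S (x + y)) (x + y) - innA A (S (x - y)) (x - y)
      = 2 * (innA A (S x) y + innA A (S y) x) := by
    simp only [innA, map_add, map_sub, inner_add_left, inner_add_right, inner_sub_left,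
      inner_sub_right]
    ring
  rw [← Complex.sub_re, hpol, hsym, Complex.mul_re, Complex.add_re, Complex.conj_re]
  norm_num
  ring

theorem opnormA_le_wA (hA : A.IsPositive) (hS : IsAAdjoint A S S) : opnormA A S ≤ wA A S := by
  have hSb := hS.isABounded hA
  refine opnormA_le_bound wA_nonneg fun x hx => ?_
  set s := vnormA A (S x)
  rcases eq_or_ne s 0 with hs | hs
  · rw [hs]; exact wA_nonneg
  set y := (s : ℂ)⁻¹ • S x
  have hy : vnormA A y = 1 := vnormA_inv_smul_self hA hs
  have hxy : innA A (S x) y = s := by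
    rw [innA_smul_right, innA_self_eq hA]
    change (s : ℂ)⁻¹ * ((s ^ 2 : ℝ) : ℂ) = s
    push_cast
    field_simp
  have hpol := hS.re_innA_add_sub hA x y
  rw [hxy, Complex.ofReal_re] at hpol
  have hplus := (Complex.re_le_norm _).trans (norm_innA_le_wA_mul hA hSb (x + y))
  have hminus := (neg_le_abs _).trans
    ((Complex.abs_re_le_norm _).trans (norm_innA_le_wA_mul hA hSb (x - y)))
  have hpar := vnormA_add_sq_add_vnormA_sub_sq hA x y
  rw [hx, hy] at hpar
  have hw : wA A S * vnormA A (x + y) ^ 2 + wA A S * vnormA A (x - y) ^ 2 = 4 * wA A S := by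
    rw [← mul_add, hpar]; ring
  linarith

theorem innA_reA_apply_self (hA : A.IsPositive) (h : IsAAdjoint A T Ts) (x : H) :
    innA A (ReA T Ts x) x = (innA A (T x) x).re := by
  have hconj : innA A (Ts x) x = starRingEnd ℂ (innA A (T x) x) := by
    rw [h.innA_apply_left, conj_innA hA]
  rw [ReA, smul_apply, add_apply, innA_smul_left, innA_add_left, hconj, Complex.add_conj,
    map_inv₀, map_ofNat]
  push_cast
  ring

theorem innA_imA_apply_self (hA : A.IsPositive) (h : IsAAdjoint A T Ts) (x : H) :
    innA A (ImA T Ts x) x = -(innA A (T x) x).im := by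
  have hconj : innA A (Ts x) x = starRingEnd ℂ (innA A (T x) x) := by
    rw [h.innA_apply_left, conj_innA hA]
  rw [ImA, smul_apply, sub_apply, innA_smul_left, innA_sub_left, hconj, Complex.sub_conj,
    map_inv₀, map_mul, map_ofNat, Complex.conj_I]
  push_cast
  field_simp

theorem wA_reA_le (hA : A.IsPositive) (h : IsAAdjoint A T Ts) : wA A (ReA T Ts) ≤ wA A T :=
  wA_le_of_norm_innA_le hA (h.isABounded hA) fun x => by
    rw [h.innA_reA_apply_self hA, Complex.norm_real, Real.norm_eq_abs]
    exact Complex.abs_re_le_norm _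

theorem wA_imA_le (hA : A.IsPositive) (h : IsAAdjoint A T Ts) : wA A (ImA T Ts) ≤ wA A T :=
  wA_le_of_norm_innA_le hA (h.isABounded hA) fun x => by
    rw [h.innA_imA_apply_self hA, norm_neg, Complex.norm_real, Real.norm_eq_abs]
    exact Complex.abs_im_le_norm _

theorem opnormA_le_opnormA_reA_add_opnormA_imA (hA : A.IsPositive) (h : IsAAdjoint A T Ts) :
    opnormA A T ≤ opnormA A (ReA T Ts) + opnormA A (ImA T Ts) := by
  refine opnormA_le_bound (add_nonneg opnormA_nonneg opnormA_nonneg) fun x hx => ?_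
  calc vnormA A (T x) = vnormA A (ReA T Ts x + I • ImA T Ts x) := by
        nth_rw 1 [← reA_add_I_smul_imA T Ts]; rfl
    _ ≤ vnormA A (ReA T Ts x) + vnormA A (ImA T Ts x) := by
        rw [← one_mul (vnormA A (ImA T Ts x)), ← Complex.norm_I, ← vnormA_smul hA]
        exact vnormA_add_le hA _ _
    _ ≤ opnormA A (ReA T Ts) + opnormA A (ImA T Ts) :=
        add_le_add (vnormA_le_opnormA ((h.reA hA).isABounded hA) hx)
          (vnormA_le_opnormA ((h.imA hA).isABounded hA) hx)

end IsAAdjoint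

theorem stmt3 (A T Ts : H →L[ℂ] H) (hA : A.IsPositive) (hTs : IsAAdjoint A T Ts)
    (hw : wA A T = opnormA A T / 2) :
    opnormA A (ReA T Ts) = opnormA A T / 2 ∧ opnormA A (ImA T Ts) = opnormA A T / 2 := by
  have hRe : opnormA A (ReA T Ts) ≤ opnormA A T / 2 :=
    hw ▸ ((hTs.reA hA).opnormA_le_wA hA).trans (hTs.wA_reA_le hA)
  have hIm : opnormA A (ImA T Ts) ≤ opnormA A T / 2 :=
    hw ▸ ((hTs.imA hA).opnormA_le_wA hA).trans (hTs.wA_imA_le hA)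
  have hsum := hTs.opnormA_le_opnormA_reA_add_opnormA_imA hA
  constructor <;> linarith
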